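/- arXiv:1907.09274 — 3 statements merged into one kernel-verified Lean document; each statement's English description precedes it below -/
import Mathlib

section
/- For any integer N ≥ 4, (1 − 1/N)^{N−1} · sin(π(1 − 1/N)) ≥ π/(N·e). -/
open Real

private lemma sin_cubic_lb {x : ℝ} (hx : 0 ≤ x) : x - x ^ 3 / 6 ≤ Real.sin x := by
  have key : ∀ y : ℝ, HasDerivAt (fun z => Real.sin z - z + z ^ 3 / 6)
      (Real.cos y - 1 + y ^ 2 / 2) y := by
    intro y
    have h1 : HasDerivAt Real.sin (Real.cos y) y := Real.hasDerivAt_sin y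
    have h2 : HasDerivAt (fun z : ℝ => z ^ 3 / 6) ((3 : ℕ) * y ^ 2 / 6) y :=
      (hasDerivAt_pow 3 y).div_const 6
    have h3 := (h1.sub (hasDerivAt_id y)).add h2
    refine h3.congr_deriv ?_
    push_cast
    ring
  have mono : MonotoneOn (fun z => Real.sin z - z + z ^ 3 / 6) (Set.Ici 0) := by
    apply monotoneOn_of_deriv_nonneg (convex_Ici 0)
    · exact (Continuous.continuousOn (by continuity))
    · intro y _
      exact (key y).differentiableAt.differentiableWithinAt
    · intro y _
      rw [(key y).deriv]
      nlinarith [Real.one_sub_sq_div_two_le_cos (x := y)]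
  have h0 := mono (Set.mem_Ici.2 le_rfl) (Set.mem_Ici.2 hx) hx
  simp only [Real.sin_zero] at h0
  linarith

set_option maxHeartbeats 1000000 in
/-- for any integer N ≥ 4, (1 − 1/N)^{N−1} · sin(π(1 − 1/N)) ≥ π/(N·e). -/
theorem stmt3 (N : ℕ) (hN : 4 ≤ N) :
    (1 - 1 / (N : ℝ)) ^ (N - 1) * Real.sin (π * (1 - 1 / (N : ℝ)))
      ≥ π / ((N : ℝ) * Real.exp 1) := by
  have hn : (4:ℝ) ≤ (N:ℝ) := by exact_mod_cast hN
  set n : ℝ := (N:ℝ) with hn_def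
  have hn0 : (0:ℝ) < n := by linarith
  have hm0 : (0:ℝ) < n - 1 := by linarith
  -- rewrite the sine
  have hsin : Real.sin (π * (1 - 1/n)) = Real.sin (π / n) := by
    have h : π * (1 - 1/n) = π - π / n := by field_simp
    rw [h, Real.sin_pi_sub]
  rw [hsin]
  set t : ℝ := (1 - 1/(2*n) - 1/(6*n^2)) / (n - 1) with ht
  have hs_pos : (0:ℝ) < 1 - 1/(2*n) - 1/(6*n^2) := by
    have h1 : 1/(2*n) ≤ 1/8 := by
      rw [div_le_div_iff₀ (by linarith) (by norm_num)]; linarith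
    have h2 : 1/(6*n^2) ≤ 1/96 := by
      rw [div_le_div_iff₀ (by positivity) (by norm_num)]; nlinarith
    linarith
  have htpos : 0 ≤ t := le_of_lt (div_pos hs_pos hm0)
  -- exp t ≥ 1 + t + t²/2 + t³/6
  have hexp_t : 1 + t + t^2/2 + t^3/6 ≤ Real.exp t := by
    have h := Real.sum_le_exp_of_nonneg htpos 4
    simp [Finset.sum_range_succ, Nat.factorial] at h
    calc 1 + t + t^2/2 + t^3/6 = 1 + t + t^2/2 + t^3/(3*2) := by ring
    _ ≤ Real.exp t := by convert h using 2 <;> norm_num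
  -- key polynomial inequality: n/(n-1) ≤ 1 + t + t²/2 + t³/6
  have hkey : n / (n-1) ≤ 1 + t + t^2/2 + t^3/6 := by
    have hdiff : (1 + t + t^2/2 + t^3/6) - n/(n-1)
        = (54*n^5 - 9*n^3 - 27*n^2 - 9*n - 1) / (6*(6*n^2*(n-1))^3) := by
      rw [ht]; field_simp; ring
    have hq : 0 ≤ (54*n^5 - 9*n^3 - 27*n^2 - 9*n - 1) / (6*(6*n^2*(n-1))^3) := by
      apply div_nonneg
      · have a1 : 16 ≤ n^2 := by nlinarith
        have a2 : 4*n^2 ≤ n^3 := by nlinarith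
        have a3 : 16*n^3 ≤ n^5 := by nlinarith [pow_pos hn0 3, mul_le_mul_of_nonneg_left a1 (pow_pos hn0 3).le]
        nlinarith [a1, a2, a3, pow_pos hn0 3]
      · positivity
    linarith [hdiff ▸ hq]
  have hexp_ge : n / (n-1) ≤ Real.exp t := le_trans hkey hexp_t
  -- (1 - 1/n) ≥ exp (-t)
  have hstep : Real.exp (-t) ≤ 1 - 1/n := by
    rw [Real.exp_neg]
    have h1 := inv_anti₀ (div_pos hn0 hm0) hexp_ge
    have h2 : (n / (n-1))⁻¹ = 1 - 1/n := by
      rw [inv_div]; field_simp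
    linarith [h2 ▸ h1]
  -- power step
  have ha0 : 0 ≤ 1 - 1/n := by
    have : 1/n ≤ 1/4 := by rw [div_le_div_iff₀ hn0 (by norm_num)]; linarith
    linarith
  have hpow : Real.exp (-t) ^ (N-1) ≤ (1 - 1/n) ^ (N-1) :=
    pow_le_pow_left₀ (Real.exp_pos _).le hstep _
  have hcast : ((N - 1 : ℕ) : ℝ) = n - 1 := by
    rw [Nat.cast_sub (by omega)]; norm_num; exact hn_def.symm
  have hpow_eq : Real.exp (-t) ^ (N-1) = Real.exp (-(1 - 1/(2*n) - 1/(6*n^2))) := by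
    rw [← Real.exp_nat_mul, hcast]
    congr 1
    rw [ht]; field_simp
  -- lower bound for exp(-s)
  have hu : Real.exp (-1) * (1 + (1/(2*n) + 1/(6*n^2)))
      ≤ Real.exp (-(1 - 1/(2*n) - 1/(6*n^2))) := by
    have h : -(1 - 1/(2*n) - 1/(6*n^2)) = -1 + (1/(2*n) + 1/(6*n^2)) := by ring
    rw [h, Real.exp_add]
    have h2 : 1 + (1/(2*n) + 1/(6*n^2)) ≤ Real.exp (1/(2*n) + 1/(6*n^2)) := by
      linarith [Real.add_one_le_exp (1/(2*n) + 1/(6*n^2))]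
    exact mul_le_mul_of_nonneg_left h2 (Real.exp_pos (-1)).le
  -- sine lower bound
  have hx0 : 0 ≤ π / n := div_nonneg pi_pos.le hn0.le
  have hsinlb : π/n - (π/n)^3/6 ≤ Real.sin (π/n) := sin_cubic_lb hx0
  -- final numeric inequality
  have hpi : π < 3.15 := pi_lt_d2
  have hy1 : π/n ≤ 1 := by
    rw [div_le_one hn0]; linarith
  have hB0 : 0 ≤ π/n - (π/n)^3/6 := by
    have h3 : (π/n)^3 ≤ π/n := pow_le_of_le_one hx0 hy1 (by norm_num)
    linarith
  have hfinal : π / n ≤ (1 + (1/(2*n) + 1/(6*n^2))) * (π/n - (π/n)^3/6) := by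
    obtain ⟨u, hu_def⟩ : ∃ u : ℝ, u = 1/(2*n) + 1/(6*n^2) := ⟨_, rfl⟩
    rw [← hu_def]
    have hu1 : 1/(2*n) ≤ 1/8 := by rw [div_le_div_iff₀ (by linarith) (by norm_num)]; linarith
    have hu2 : 1/(6*n^2) ≤ 1/96 := by rw [div_le_div_iff₀ (by positivity) (by norm_num)]; nlinarith
    have hupos : 0 ≤ u := by rw [hu_def]; positivity
    have hu96 : u ≤ 13/96 := by rw [hu_def]; linarith
    clear_value n
    have hpi2 : π^2 ≤ 9.9225 := by nlinarith [pi_pos]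
    have hmain : (1+u)*π^2 ≤ 3*n+1 := by
      nlinarith [mul_le_mul hu96 hpi2 (sq_nonneg π) (by norm_num : (0:ℝ) ≤ 13/96)]
    have h6u : 6*n^2*u = 3*n+1 := by rw [hu_def]; field_simp; ring
    have hcore : (1+u)*(π/n)^2 ≤ 6*u := by
      rw [← mul_le_mul_iff_of_pos_right (by positivity : (0:ℝ) < n^2)]
      have e1 : (1+u)*(π/n)^2 * n^2 = (1+u)*π^2 := by field_simp
      have e2 : 6*u*n^2 = 3*n+1 := by linarith [h6u]
      rw [e1]
      nlinarith [hmain]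
    have hprod : 0 ≤ (π/n) * (6*u - (1+u)*(π/n)^2) := mul_nonneg hx0 (by linarith)
    nlinarith [hprod]
  -- combine
  calc (1 - 1/n) ^ (N-1) * Real.sin (π/n)
      ≥ Real.exp (-t) ^ (N-1) * (π/n - (π/n)^3/6) := by
        exact mul_le_mul hpow hsinlb hB0 (pow_nonneg ha0 _)
    _ = Real.exp (-(1 - 1/(2*n) - 1/(6*n^2))) * (π/n - (π/n)^3/6) := by rw [hpow_eq]
    _ ≥ Real.exp (-1) * (1 + (1/(2*n) + 1/(6*n^2))) * (π/n - (π/n)^3/6) := by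
        exact mul_le_mul_of_nonneg_right hu hB0
    _ ≥ Real.exp (-1) * (π/n) := by
        have := mul_le_mul_of_nonneg_left hfinal (Real.exp_pos (-1)).le
        calc Real.exp (-1) * (1 + (1/(2*n) + 1/(6*n^2))) * (π/n - (π/n)^3/6)
            = Real.exp (-1) * ((1 + (1/(2*n) + 1/(6*n^2))) * (π/n - (π/n)^3/6)) := by ring
          _ ≥ Real.exp (-1) * (π/n) := this
    _ = π / (n * Real.exp 1) := by
        rw [Real.exp_neg]
        field_simp
end

section
/- Suppose ε ≥ 0, Δ > 0, K ≥ 0, δΘ ∈ (0, 2π], and suppose ε < (−K(2π)² + √(K²(2π)⁴ + 4Δ²))/4. Then there exists an even integer N ≥ 2 such that ε(N−1)² − Δ(N−1) + (K/2)(δΘ)² < 0. -/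
open Real

/-- if ε ≥ 0, Δ > 0, K ≥ 0, δΘ ∈ (0,2π] and
ε < (−K(2π)² + √(K²(2π)⁴ + 4Δ²))/4, then there exists an even integer N ≥ 2 with
ε(N−1)² − Δ(N−1) + (K/2)(δΘ)² < 0. -/
theorem stmt8 (ε Δ K δΘ : ℝ) (hε : 0 ≤ ε) (hΔ : 0 < Δ) (hK : 0 ≤ K)
    (hδ : 0 < δΘ) (hδ2 : δΘ ≤ 2 * π)
    (h : ε < (-K * (2 * π) ^ 2 + Real.sqrt (K ^ 2 * (2 * π) ^ 4 + 4 * Δ ^ 2)) / 4) :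
    ∃ N : ℕ, Even N ∧ 2 ≤ N ∧
      ε * ((N : ℝ) - 1) ^ 2 - Δ * ((N : ℝ) - 1) + K / 2 * δΘ ^ 2 < 0 := by
  have hπ := Real.pi_pos
  set C : ℝ := K * (2 * π) ^ 2 / 2 with hCdef
  have hC0 : 0 ≤ C := by positivity
  have hC' : K / 2 * δΘ ^ 2 ≤ C := by
    rw [hCdef]
    have hsq : δΘ ^ 2 ≤ (2 * π) ^ 2 := pow_le_pow_left₀ hδ.le hδ2 2
    nlinarith [hsq, hK]
  have htnn : (0:ℝ) ≤ K ^ 2 * (2 * π) ^ 4 + 4 * Δ ^ 2 := by positivity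
  have ht : Real.sqrt (K ^ 2 * (2 * π) ^ 4 + 4 * Δ ^ 2) ^ 2
      = K ^ 2 * (2 * π) ^ 4 + 4 * Δ ^ 2 := Real.sq_sqrt htnn
  have h' : 4 * ε + 2 * C < Real.sqrt (K ^ 2 * (2 * π) ^ 4 + 4 * Δ ^ 2) := by
    rw [hCdef]; linarith
  have hkey : 4 * ε ^ 2 + 4 * ε * C < Δ ^ 2 := by
    have hsq : (4 * ε + 2 * C) ^ 2
        < Real.sqrt (K ^ 2 * (2 * π) ^ 4 + 4 * Δ ^ 2) ^ 2 := by
      apply pow_lt_pow_left₀ h' (by linarith) (by norm_num)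
    rw [ht] at hsq
    have h4C : 4 * C ^ 2 = K ^ 2 * (2 * π) ^ 4 := by rw [hCdef]; ring
    nlinarith [hsq]
  rcases eq_or_lt_of_le hε with hε0 | hεpos
  · -- ε = 0 case
    refine ⟨2 * ⌈C / Δ⌉₊ + 2, ⟨⌈C / Δ⌉₊ + 1, by ring⟩, by omega, ?_⟩
    have hceil : C / Δ ≤ (⌈C / Δ⌉₊ : ℝ) := Nat.le_ceil _
    have hCk : C ≤ (⌈C / Δ⌉₊ : ℝ) * Δ := (div_le_iff₀ hΔ).mp hceil
    rw [← hε0]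
    push_cast
    nlinarith [hCk, hC', hΔ, (by positivity : (0:ℝ) ≤ (⌈C / Δ⌉₊ : ℝ))]
  · -- ε > 0 case
    have hdisc : 0 ≤ Δ ^ 2 - 4 * ε * C := by nlinarith [sq_nonneg ε]
    set s := Real.sqrt (Δ ^ 2 - 4 * ε * C) with hsdef
    have hs2 : s ^ 2 = Δ ^ 2 - 4 * ε * C := Real.sq_sqrt hdisc
    have hs0 : 0 ≤ s := Real.sqrt_nonneg _
    have hsε : 2 * ε < s := by nlinarith
    have hsΔ : s ≤ Δ := by nlinarith
    set a : ℝ := (Δ - s) / (2 * ε) with hadef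
    set b : ℝ := (Δ + s) / (2 * ε) with hbdef
    have haε : 2 * ε * a = Δ - s := by rw [hadef]; field_simp
    have hbε : 2 * ε * b = Δ + s := by rw [hbdef]; field_simp
    have ha0 : 0 ≤ a := div_nonneg (by linarith) (by linarith)
    set k := ⌊(a + 1) / 2⌋₊ with hkdef
    refine ⟨2 * k + 2, ⟨k + 1, by ring⟩, by omega, ?_⟩
    have hm : ((2 * k + 2 : ℕ) : ℝ) - 1 = 2 * (k : ℝ) + 1 := by push_cast; ring
    rw [hm]
    set m : ℝ := 2 * (k : ℝ) + 1 with hmdef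
    have hk1 : (k : ℝ) ≤ (a + 1) / 2 := Nat.floor_le (by positivity)
    have hk2 : (a + 1) / 2 < (k : ℝ) + 1 := Nat.lt_floor_add_one _
    have hm1 : a < m := by rw [hmdef]; linarith
    have hm2 : m ≤ a + 2 := by rw [hmdef]; linarith
    have hba : 2 < b - a := by
      have hdiff : b - a = s / ε := by rw [hadef, hbdef]; field_simp; ring
      rw [hdiff]; exact (lt_div_iff₀ hεpos).mpr (by linarith)
    have hmb : m < b := by linarith
    have hab : ε * a * b = C := by
      have h1 : (2 * ε * a) * (2 * ε * b) = (Δ - s) * (Δ + s) := by rw [haε, hbε]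
      have h2 : 4 * ε * (ε * a * b) = 4 * ε * C := by linear_combination h1 - hs2
      exact mul_left_cancel₀ (by positivity) h2
    have hsum : ε * (a + b) = Δ := by linear_combination (haε + hbε) / 2
    have hsum_m : ε * (a + b) * m = Δ * m := by rw [hsum]
    have key : 0 < ε * (m - a) * (b - m) :=
      mul_pos (mul_pos hεpos (by linarith)) (by linarith)
    have hid : ε * (m - a) * (b - m) = -(ε * m ^ 2 - Δ * m + C) := by
      linear_combination hsum_m - hab
    rw [hid] at key
    clear_value m k a b s C
    linarith
end

section
/- Let C: ℝ → ℝ be a function and suppose there are angles a₁, b₂, a₃, b₄ with |C(b₂−a₁) + C(b₂−a₃) + C(b₄−a₃) − C(b₄−a₁)| > 2 where C is interpreted as a relational correlation. Then C does not admit a local hidden variable model: there is no probability space (Λ, μ) and measurable functions C_A, C_B: ℝ × Λ → [−1,1] with C(β−α) = ∫_Λ C_A(α,λ) C_B(β,λ) dμ(λ) for all α, β. (CHSH inequality for relational correlations.) -/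
open MeasureTheory

/-- CHSH for relational correlations: if a relational correlation function C
violates the CHSH combination, |C(b₂−a₁) + C(b₂−a₃) + C(b₄−a₃) − C(b₄−a₁)| > 2, then C
admits no local hidden variable model: there is no probability space (Λ,μ) with measurable
response functions C_A, C_B bounded in [−1,1] reproducing C(β−α) = ∫ C_A(α,·) C_B(β,·) dμ. -/
theorem stmt19 (C : ℝ → ℝ) (a1 b2 a3 b4 : ℝ)
    (h : |C (b2 - a1) + C (b2 - a3) + C (b4 - a3) - C (b4 - a1)| > 2) :
    ¬ ∃ (Λ : Type) (_ : MeasurableSpace Λ) (μ : Measure Λ)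
        (_ : IsProbabilityMeasure μ) (CA CB : ℝ → Λ → ℝ),
        (∀ α, Measurable (CA α)) ∧ (∀ β, Measurable (CB β)) ∧
        (∀ α l, CA α l ∈ Set.Icc (-1 : ℝ) 1) ∧
        (∀ β l, CB β l ∈ Set.Icc (-1 : ℝ) 1) ∧
        (∀ α β, C (β - α) = ∫ l, CA α l * CB β l ∂μ) := by
  rintro ⟨Λ, mΛ, μ, hprob, CA, CB, hmA, hmB, hbA, hbB, hrep⟩
  -- integrability of products
  have hint : ∀ α β, Integrable (fun l => CA α l * CB β l) μ := by
    intro α β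
    refine Integrable.mono' (integrable_const 1) ((hmA α).mul (hmB β)).aestronglyMeasurable
      (Filter.Eventually.of_forall fun l => ?_)
    have h1 := hbA α l
    have h2 := hbB β l
    simp only [Set.mem_Icc] at h1 h2
    rw [Real.norm_eq_abs, abs_mul]
    calc |CA α l| * |CB β l| ≤ 1 * 1 := by
          apply mul_le_mul (abs_le.2 ⟨h1.1, h1.2⟩) (abs_le.2 ⟨h2.1, h2.2⟩)
            (abs_nonneg _) zero_le_one
      _ = 1 := by ring
  have key : C (b2 - a1) + C (b2 - a3) + C (b4 - a3) - C (b4 - a1)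
      = ∫ l, (CA a1 l * CB b2 l + CA a3 l * CB b2 l + CA a3 l * CB b4 l
            - CA a1 l * CB b4 l) ∂μ := by
    have i1 : Integrable (fun l => CA a1 l * CB b2 l + CA a3 l * CB b2 l) μ :=
      (hint a1 b2).add (hint a3 b2)
    have i2 : Integrable
        (fun l => CA a1 l * CB b2 l + CA a3 l * CB b2 l + CA a3 l * CB b4 l) μ :=
      i1.add (hint a3 b4)
    have e1 := integral_add (hint a1 b2) (hint a3 b2)
    have e2 := integral_add i1 (hint a3 b4)
    have e3 := integral_sub i2 (hint a1 b4)
    rw [hrep a1 b2, hrep a3 b2, hrep a3 b4, hrep a1 b4, ← e1, ← e2, ← e3]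
  have hb : |∫ l, (CA a1 l * CB b2 l + CA a3 l * CB b2 l + CA a3 l * CB b4 l
            - CA a1 l * CB b4 l) ∂μ| ≤ 2 := by
    have := norm_integral_le_of_norm_le_const (μ := μ)
      (f := fun l => CA a1 l * CB b2 l + CA a3 l * CB b2 l + CA a3 l * CB b4 l
            - CA a1 l * CB b4 l) (C := 2) ?_
    · simpa [measure_univ] using this
    · refine Filter.Eventually.of_forall fun l => ?_
      have h1 := hbA a1 l; have h2 := hbA a3 l
      have h3 := hbB b2 l; have h4 := hbB b4 l
      simp only [Set.mem_Icc] at h1 h2 h3 h4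
      beta_reduce
      rw [Real.norm_eq_abs]
      have e : CA a1 l * CB b2 l + CA a3 l * CB b2 l + CA a3 l * CB b4 l
          - CA a1 l * CB b4 l
          = CA a1 l * (CB b2 l - CB b4 l) + CA a3 l * (CB b2 l + CB b4 l) := by ring
      rw [e]
      have hA1 : |CA a1 l| ≤ 1 := abs_le.2 ⟨h1.1, h1.2⟩
      have hA3 : |CA a3 l| ≤ 1 := abs_le.2 ⟨h2.1, h2.2⟩
      calc |CA a1 l * (CB b2 l - CB b4 l) + CA a3 l * (CB b2 l + CB b4 l)|
          ≤ |CA a1 l * (CB b2 l - CB b4 l)| + |CA a3 l * (CB b2 l + CB b4 l)| :=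
            abs_add_le _ _
        _ ≤ |CB b2 l - CB b4 l| + |CB b2 l + CB b4 l| := by
            rw [abs_mul, abs_mul]
            exact add_le_add (mul_le_of_le_one_left (abs_nonneg _) hA1)
              (mul_le_of_le_one_left (abs_nonneg _) hA3)
        _ ≤ 2 := by
            rcases abs_cases (CB b2 l - CB b4 l) with ⟨e1, _⟩ | ⟨e1, _⟩ <;>
            rcases abs_cases (CB b2 l + CB b4 l) with ⟨e2, _⟩ | ⟨e2, _⟩ <;>
            rw [e1, e2] <;> linarith [h3.1, h3.2, h4.1, h4.2]
  rw [key] at h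
  linarith [hb, h]
end
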